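/- arXiv:2006.05467 — 8 statements merged into one kernel-verified Lean document; each statement's English description precedes it below -/
import Mathlib

section
/- Let φ : ℝ → ℝ be differentiable with φ(x) = (deriv φ x) * x for all x (a homogeneous activation). Fix u ∈ ℝ^k and a differentiable function F : ℝ^m → ℝ, and define R : ℝ^m × ℝ^k → ℝ by R(a, b) = F(φ(⟨b, u⟩) • a), modeling a hidden neuron with incoming parameters b (acting on upstream activations u), outgoing parameters a, and downstream computation F. Then the total synaptic saliency of the outgoing parameters equals that of the incoming parameters: ⟨∇_a R(a,b), a⟩ = ⟨∇_b R(a,b), b⟩. -/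
/-! Write `s = ⟪b, u⟫` and `y = φ s • a` for the neuron's output. Both saliencies equal
`DF(y) y`: on the outgoing side because `a ↦ R a b` is `F` precomposed with scaling by `φ s`;
on the incoming side because the chain rule produces the factor `φ' s * s`, which is `φ s` by
homogeneity. -/

section

variable {E G H : Type*} [NormedAddCommGroup E] [NormedSpace ℝ E]
  [NormedAddCommGroup G] [NormedSpace ℝ G] [NormedAddCommGroup H] [NormedSpace ℝ H]

theorem fderiv_comp_const_smul_apply_self (F : E → H) (c : ℝ) (a : E) :
    fderiv ℝ (fun a' => F (c • a')) a a = fderiv ℝ F (c • a) (c • a) := by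
  rw [fderiv_comp_smul, smul_apply, map_smul]

theorem fderiv_comp_smul_const_apply_self {F : E → H} {φ : ℝ → ℝ} (ℓ : G →L[ℝ] ℝ) (a : E)
    {b : G} (hφ : DifferentiableAt ℝ φ (ℓ b)) (hF : DifferentiableAt ℝ F (φ (ℓ b) • a)) :
    fderiv ℝ (fun b' => F (φ (ℓ b') • a)) b b
      = (deriv φ (ℓ b) * ℓ b) • fderiv ℝ F (φ (ℓ b) • a) a := by
  have hinner : HasFDerivAt (fun b' => φ (ℓ b') • a) ((deriv φ (ℓ b) • ℓ).smulRight a) b :=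
    (hφ.hasDerivAt.comp_hasFDerivAt b ℓ.hasFDerivAt).smul_const a
  have hcomp : HasFDerivAt (fun b' => F (φ (ℓ b') • a)) _ b := hF.hasFDerivAt.comp b hinner
  simp [hcomp.fderiv]

theorem fderiv_comp_homogeneous_smul_apply_self {F : E → H} {φ : ℝ → ℝ} (ℓ : G →L[ℝ] ℝ)
    (a : E) {b : G} (hφ : DifferentiableAt ℝ φ (ℓ b)) (hhom : φ (ℓ b) = deriv φ (ℓ b) * ℓ b)
    (hF : DifferentiableAt ℝ F (φ (ℓ b) • a)) :
    fderiv ℝ (fun b' => F (φ (ℓ b') • a)) b b = fderiv ℝ F (φ (ℓ b) • a) (φ (ℓ b) • a) := by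
  rw [fderiv_comp_smul_const_apply_self ℓ a hφ hF, ← hhom, map_smul]

end

/-- Neuron-wise conservation of synaptic saliency for a single hidden
neuron: with homogeneous activation `φ`, incoming parameters `b` (acting on upstream
activations `u`), outgoing parameters `a` and downstream computation `F`, the total
synaptic saliency of the outgoing parameters equals that of the incoming parameters. -/
theorem stmt_0 (k m : ℕ) (φ : ℝ → ℝ) (hφdiff : Differentiable ℝ φ)
    (hφ : ∀ x : ℝ, φ x = deriv φ x * x)
    (u : EuclideanSpace ℝ (Fin k))
    (F : EuclideanSpace ℝ (Fin m) → ℝ) (hF : Differentiable ℝ F)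
    (R : EuclideanSpace ℝ (Fin m) → EuclideanSpace ℝ (Fin k) → ℝ)
    (hR : ∀ a b, R a b = F (φ ((inner ℝ b u : ℝ)) • a))
    (a : EuclideanSpace ℝ (Fin m)) (b : EuclideanSpace ℝ (Fin k)) :
    (inner ℝ (gradient (fun a' => R a' b) a) a : ℝ)
      = (inner ℝ (gradient (fun b' => R a b') b) b : ℝ) := by
  have hRa : (fun a' => R a' b) = fun a' => F (φ (innerSLFlip ℝ u b) • a') :=
    funext fun a' => hR a' b
  have hRb : (fun b' => R a b') = fun b' => F (φ (innerSLFlip ℝ u b') • a) :=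
    funext fun b' => hR a b'
  rw [inner_gradient_left, inner_gradient_left, hRa, hRb, fderiv_comp_const_smul_apply_self,
    fderiv_comp_homogeneous_smul_apply_self _ a (hφdiff _) (hφ _) (hF _)]
end

section
/- Let φ : ℝ → ℝ be differentiable with φ(x) = (deriv φ x) * x for all x (a homogeneous activation). Consider a two-layer network with input x ∈ ℝ^n, hidden preactivations z = W x + b where W ∈ ℝ^{m×n}, b ∈ ℝ^m, hidden activations h_j = φ(z_j), and output y = V h where V ∈ ℝ^{p×m}, and let R : ℝ^p → ℝ be differentiable. Then for every hidden unit j, the total synaptic saliency of the outgoing parameters equals the total synaptic saliency of the incoming parameters (including the bias): Σ_i V_{ij}·∂(R∘f)/∂V_{ij} = Σ_k W_{jk}·∂(R∘f)/∂W_{jk} + b_j·∂(R∘f)/∂b_j, where f denotes the network output as a function of the parameters (W, b, V) at the fixed input x. -/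
/-! With `z = W x + b` and `L` the derivative of `R` at the network output, the chain rule gives
`∂/∂V_ij = φ(z_j) L(e_i)`, `∂/∂W_jk = φ'(z_j) x_k L(V_{·j})` and `∂/∂b_j = φ'(z_j) L(V_{·j})`.
So the outgoing saliency of unit `j` is `φ(z_j) L(V_{·j})`, the incoming one is
`φ'(z_j) z_j L(V_{·j})`, and homogeneity `φ(z) = φ'(z) z` identifies the two. -/

/-- A two-layer network: input `x`, hidden preactivations `W x + b`, hidden
activations via `φ`, output `V · φ.(W x + b)`. -/
noncomputable def net1 (n m p : ℕ) (φ : ℝ → ℝ) (x : Fin n → ℝ)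
    (W : Matrix (Fin m) (Fin n) ℝ) (b : Fin m → ℝ)
    (V : Matrix (Fin p) (Fin m) ℝ) : Fin p → ℝ :=
  fun i => ∑ j, V i j * φ ((∑ k, W j k * x k) + b j)

open Matrix Function

section

variable {𝕜 ι κ : Type*} [NontriviallyNormedField 𝕜] [Fintype ι] [DecidableEq ι]

theorem hasDerivAt_update_dotProduct (v w : ι → 𝕜) (k : ι) (t : 𝕜) :
    HasDerivAt (fun s => update v k s ⬝ᵥ w) (w k) t := by
  have h := hasDerivAt_pi.1 (hasDerivAt_update v k t)
  simpa [dotProduct, Pi.single_apply] using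
    HasDerivAt.fun_sum (u := Finset.univ) fun l _ => (h l).mul_const (w l)

theorem HasDerivAt.update {f : 𝕜 → 𝕜} {d t : 𝕜} (hf : HasDerivAt f d t) (u : ι → 𝕜) (j : ι) :
    HasDerivAt (fun s => Function.update u j (f s)) (d • Pi.single j 1) t :=
  (hasDerivAt_update u j (f t)).scomp t hf

theorem HasDerivAt.mulVec_update [CompleteSpace 𝕜] [Fintype κ] {f : 𝕜 → 𝕜} {d t : 𝕜}
    (hf : HasDerivAt f d t) (M : Matrix κ ι 𝕜) (u : ι → 𝕜) (j : ι) :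
    HasDerivAt (fun s => M *ᵥ Function.update u j (f s)) (d • M.col j) t := by
  have h := (mulVecLin M).toContinuousLinearMap.hasFDerivAt.comp_hasDerivAt t (hf.update u j)
  rw [map_smul, LinearMap.coe_toContinuousLinearMap', mulVecLin_apply, mulVec_single_one] at h
  exact h

theorem HasFDerivAt.deriv_comp_of_eq {F : Type*} [NormedAddCommGroup F] [NormedSpace 𝕜 F]
    {R : F → 𝕜} {g : 𝕜 → F} {L : F →L[𝕜] 𝕜} {v y : F} {t : 𝕜}
    (hR : HasFDerivAt R L y) (hg : HasDerivAt g v t) (hy : y = g t) :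
    deriv (fun s => R (g s)) t = L v :=
  (hR.comp_hasDerivAt_of_eq t hg hy).deriv

end

section Network

variable {n m p : ℕ} (φ : ℝ → ℝ) (x : Fin n → ℝ) (W : Matrix (Fin m) (Fin n) ℝ) (b : Fin m → ℝ)
  (V : Matrix (Fin p) (Fin m) ℝ)

theorem net1_eq_mulVec : net1 n m p φ x W b V = V *ᵥ (φ ∘ (W *ᵥ x + b)) := rfl

theorem net1_eq_of_mulVec_add_eq_update {W' : Matrix (Fin m) (Fin n) ℝ} {b' : Fin m → ℝ} {j : Fin m}
    {s : ℝ} (h : W' *ᵥ x + b' = update (W *ᵥ x + b) j s) :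
    net1 n m p φ x W' b' V = V *ᵥ update (φ ∘ (W *ᵥ x + b)) j (φ s) := by
  rw [net1_eq_mulVec, h, comp_update]

theorem updateRow_mulVec_add (j : Fin m) (r : Fin n → ℝ) :
    W.updateRow j r *ᵥ x + b = update (W *ᵥ x + b) j (r ⬝ᵥ x + b j) := by
  rw [updateRow_mulVec, update_add, update_eq_self]

theorem mulVec_add_update (j : Fin m) (t : ℝ) :
    W *ᵥ x + update b j t = update (W *ᵥ x + b) j ((W *ᵥ x) j + t) := by
  rw [update_add, update_eq_self]

theorem hasDerivAt_net1_updateRow_V (i : Fin p) (j : Fin m) (t : ℝ) :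
    HasDerivAt (fun s => net1 n m p φ x W b (V.updateRow i (update (V i) j s)))
      (φ ((W *ᵥ x + b) j) • Pi.single i 1) t := by
  simp_rw [net1_eq_mulVec, updateRow_mulVec]
  exact (hasDerivAt_update_dotProduct _ _ j t).update _ i

theorem hasDerivAt_net1_updateRow_W (j : Fin m) (k : Fin n)
    (hφ : DifferentiableAt ℝ φ ((W *ᵥ x + b) j)) :
    HasDerivAt (fun s => net1 n m p φ x (W.updateRow j (update (W j) k s)) b V)
      ((deriv φ ((W *ᵥ x + b) j) * x k) • V.col j) (W j k) := by
  simp_rw [net1_eq_of_mulVec_add_eq_update φ x W b V (updateRow_mulVec_add x W b j _)]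
  have hpre := (hasDerivAt_update_dotProduct (W j) x k (W j k)).add_const (b j)
  refine HasDerivAt.mulVec_update ?_ V _ j
  exact hφ.hasDerivAt.comp_of_eq _ hpre (by rw [update_eq_self]; rfl)

theorem hasDerivAt_net1_update_b (j : Fin m) (hφ : DifferentiableAt ℝ φ ((W *ᵥ x + b) j)) :
    HasDerivAt (fun s => net1 n m p φ x W (update b j s) V)
      (deriv φ ((W *ᵥ x + b) j) • V.col j) (b j) := by
  simp_rw [net1_eq_of_mulVec_add_eq_update φ x W b V (mulVec_add_update x W b j _)]
  refine HasDerivAt.mulVec_update ?_ V _ j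
  have h := hφ.hasDerivAt.comp (b j) ((hasDerivAt_id' (b j)).const_add ((W *ᵥ x) j))
  rwa [mul_one] at h

end Network

section Saliency

variable {n m p : ℕ} {φ : ℝ → ℝ} {x : Fin n → ℝ} {W : Matrix (Fin m) (Fin n) ℝ} {b : Fin m → ℝ}
  {V : Matrix (Fin p) (Fin m) ℝ} {R : (Fin p → ℝ) → ℝ}

theorem deriv_comp_net1_updateRow_V (hR : DifferentiableAt ℝ R (net1 n m p φ x W b V))
    (i : Fin p) (j : Fin m) :
    deriv (fun t => R (net1 n m p φ x W b (V.updateRow i (update (V i) j t)))) (V i j)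
      = φ ((W *ᵥ x + b) j) * fderiv ℝ R (net1 n m p φ x W b V) (Pi.single i 1) := by
  rw [hR.hasFDerivAt.deriv_comp_of_eq (hasDerivAt_net1_updateRow_V φ x W b V i j _)
    (by rw [update_eq_self, updateRow_eq_self]), map_smul, smul_eq_mul]

theorem deriv_comp_net1_updateRow_W (hR : DifferentiableAt ℝ R (net1 n m p φ x W b V))
    (j : Fin m) (k : Fin n) (hφ : DifferentiableAt ℝ φ ((W *ᵥ x + b) j)) :
    deriv (fun t => R (net1 n m p φ x (W.updateRow j (update (W j) k t)) b V)) (W j k)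
      = deriv φ ((W *ᵥ x + b) j) * x k * fderiv ℝ R (net1 n m p φ x W b V) (V.col j) := by
  rw [hR.hasFDerivAt.deriv_comp_of_eq (hasDerivAt_net1_updateRow_W φ x W b V j k hφ)
    (by rw [update_eq_self, updateRow_eq_self]), map_smul, smul_eq_mul]

theorem deriv_comp_net1_update_b (hR : DifferentiableAt ℝ R (net1 n m p φ x W b V))
    (j : Fin m) (hφ : DifferentiableAt ℝ φ ((W *ᵥ x + b) j)) :
    deriv (fun t => R (net1 n m p φ x W (update b j t) V)) (b j)
      = deriv φ ((W *ᵥ x + b) j) * fderiv ℝ R (net1 n m p φ x W b V) (V.col j) := by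
  rw [hR.hasFDerivAt.deriv_comp_of_eq (hasDerivAt_net1_update_b φ x W b V j hφ)
    (by rw [update_eq_self]), map_smul, smul_eq_mul]

theorem outgoing_saliency_eq (hR : DifferentiableAt ℝ R (net1 n m p φ x W b V)) (j : Fin m) :
    ∑ i, V i j * deriv (fun t => R (net1 n m p φ x W b (V.updateRow i (update (V i) j t)))) (V i j)
      = φ ((W *ᵥ x + b) j) * fderiv ℝ R (net1 n m p φ x W b V) (V.col j) := by
  conv_rhs => rw [pi_eq_sum_univ' (V.col j), map_sum, Finset.mul_sum]
  refine Finset.sum_congr rfl fun i _ => ?_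
  rw [deriv_comp_net1_updateRow_V hR, map_smul, smul_eq_mul, col_apply]
  ring

theorem incoming_saliency_eq (hR : DifferentiableAt ℝ R (net1 n m p φ x W b V)) (j : Fin m)
    (hφ : DifferentiableAt ℝ φ ((W *ᵥ x + b) j)) :
    (∑ k, W j k * deriv (fun t => R (net1 n m p φ x (W.updateRow j (update (W j) k t)) b V))
        (W j k)) + b j * deriv (fun t => R (net1 n m p φ x W (update b j t) V)) (b j)
      = deriv φ ((W *ᵥ x + b) j) * (W *ᵥ x + b) j
          * fderiv ℝ R (net1 n m p φ x W b V) (V.col j) := by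
  simp only [deriv_comp_net1_updateRow_W hR j _ hφ, deriv_comp_net1_update_b hR j hφ,
    Pi.add_apply, mulVec, dotProduct, add_mul, mul_add, Finset.sum_mul, Finset.mul_sum]
  congr 1
  · exact Finset.sum_congr rfl fun k _ => by ring
  · ring

end Saliency

/-- Neuron-wise conservation of synaptic saliency for a two-layer
network with homogeneous activation: for every hidden unit `j`, the total synaptic
saliency of the outgoing parameters equals the total synaptic saliency of the incoming
parameters (including the bias). -/
theorem stmt_1 (n m p : ℕ) (φ : ℝ → ℝ) (hφdiff : Differentiable ℝ φ)
    (hφ : ∀ x : ℝ, φ x = deriv φ x * x)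
    (x : Fin n → ℝ) (W : Matrix (Fin m) (Fin n) ℝ) (b : Fin m → ℝ)
    (V : Matrix (Fin p) (Fin m) ℝ)
    (R : (Fin p → ℝ) → ℝ) (hR : Differentiable ℝ R) (j : Fin m) :
    ∑ i, V i j *
        deriv (fun t => R (net1 n m p φ x W b
          (V.updateRow i (Function.update (V i) j t)))) (V i j)
      = (∑ k, W j k *
          deriv (fun t => R (net1 n m p φ x
            (W.updateRow j (Function.update (W j) k t)) b V)) (W j k))
        + b j * deriv (fun t => R (net1 n m p φ x W (Function.update b j t) V)) (b j) := by
  rw [outgoing_saliency_eq (hR _), incoming_saliency_eq (hR _) j (hφdiff _), ← hφ]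
end

section
/- Let φ : ℝ → ℝ be differentiable with φ(x) = (deriv φ x) * x for all x (a homogeneous activation). Consider an L-layer fully connected network on ℝ^n: x_0 = x, x_l = φ.(W_l x_{l-1}) for l = 1, …, L−1 with W_l ∈ ℝ^{n×n}, and output y = W_L x_{L-1}; let R : ℝ^n → ℝ be differentiable. Then for every layer l, the total synaptic saliency of the parameters of that layer equals ⟨∇R(y), y⟩: Σ_{i,j} (W_l)_{ij} · ∂(R∘f)/∂(W_l)_{ij} = ⟨∇R(y), y⟩, where f denotes the network output as a function of the matrices (W_1, …, W_L) at the fixed input x. In particular this total is the same for every layer l. -/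
/-!
A network with homogeneous activations is positively homogeneous of degree one in the weights
`W_l` of any single layer, so its derivative with respect to `W_l` satisfies Euler's relation
`D(W_l) = y`. Since each layer is linear or an entrywise homogeneous activation, the relation
is checked one layer at a time through the chain rule, using `φ(z) = φ'(z) z` in place of
homogeneity itself. The chain rule through `R` then gives
`∑ (W_l)_{ij} ∂(R ∘ f)/∂(W_l)_{ij} = R'(y)(D(W_l)) = R'(y)(y)`.
-/

/-- Hidden activations of a fully connected network: `x_0 = x`,
`x_l = φ.(W_l x_{l-1})`. -/
noncomputable def actL (n : ℕ) (φ : ℝ → ℝ) (W : ℕ → Matrix (Fin n) (Fin n) ℝ)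
    (x : Fin n → ℝ) : ℕ → Fin n → ℝ
  | 0 => x
  | l + 1 => fun i => φ (∑ j, W (l + 1) i j * actL n φ W x l j)

/-- Output of the `L`-layer fully connected network: `y = W_L x_{L-1}` (no activation
on the output layer). -/
noncomputable def netL (n L : ℕ) (φ : ℝ → ℝ) (W : ℕ → Matrix (Fin n) (Fin n) ℝ)
    (x : Fin n → ℝ) : Fin n → ℝ :=
  fun i => ∑ j, W L i j * actL n φ W x (L - 1) j

open Function Matrix

section Euler

variable {𝕜 E F G : Type*} [NontriviallyNormedField 𝕜]
  [NormedAddCommGroup E] [NormedSpace 𝕜 E] [NormedAddCommGroup F] [NormedSpace 𝕜 F]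
  [NormedAddCommGroup G] [NormedSpace 𝕜 G]

variable (𝕜) in
/-- Euler's relation `f'(a) a = f(a)`, satisfied by differentiable functions that are
positively homogeneous of degree one. -/
def SatisfiesEulerAt (f : E → F) (a : E) : Prop :=
  ∃ f' : E →L[𝕜] F, HasFDerivAt f f' a ∧ f' a = f a

theorem SatisfiesEulerAt.comp {g : F → G} {f : E → F} {a : E}
    (hg : SatisfiesEulerAt 𝕜 g (f a)) (hf : SatisfiesEulerAt 𝕜 f a) :
    SatisfiesEulerAt 𝕜 (g ∘ f) a := by
  obtain ⟨g', hg, hg'⟩ := hg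
  obtain ⟨f', hf, hf'⟩ := hf
  exact ⟨g'.comp f', hg.comp a hf, by simp [hf', hg']⟩

theorem LinearMap.satisfiesEulerAt [CompleteSpace 𝕜] [FiniteDimensional 𝕜 E]
    (A : E →ₗ[𝕜] F) (a : E) : SatisfiesEulerAt 𝕜 A a :=
  ⟨A.toContinuousLinearMap, A.toContinuousLinearMap.hasFDerivAt, rfl⟩

theorem satisfiesEulerAt_pi_map {ι : Type*} [Fintype ι] {φ : 𝕜 → 𝕜}
    (hφd : Differentiable 𝕜 φ) (hφ : ∀ x, φ x = deriv φ x * x) (v : ι → 𝕜) :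
    SatisfiesEulerAt 𝕜 (fun w i => φ (w i)) v := by
  refine ⟨.pi fun i => deriv φ (v i) • .proj i, ?_, ?_⟩
  · exact hasFDerivAt_pi.2 fun i =>
      (hφd (v i)).hasDerivAt.comp_hasFDerivAt v (hasFDerivAt_apply i v)
  · ext i
    simp [hφ (v i)]

end Euler

section PartialDerivatives

variable {𝕜 F : Type*} [NontriviallyNormedField 𝕜] [NormedAddCommGroup F] [NormedSpace 𝕜 F]
  {ι : Type*} [Fintype ι] [DecidableEq ι]

theorem HasFDerivAt.comp_update {E : ι → Type*} [∀ i, NormedAddCommGroup (E i)]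
    [∀ i, NormedSpace 𝕜 (E i)] {f : (∀ i, E i) → F} {f' : (∀ i, E i) →L[𝕜] F} {v : ∀ i, E i}
    (hf : HasFDerivAt f f' v) (i : ι) :
    HasFDerivAt (fun y => f (update v i y)) (f'.comp (.single 𝕜 E i)) (v i) := by
  have hupdate : HasFDerivAt (update v i) (.single 𝕜 E i) (v i) := by
    convert hasFDerivAt_update v (v i) using 1
    ext y j
    rcases eq_or_ne j i with rfl | hj <;> simp [*]
  rw [← update_eq_self i v] at hf
  exact hf.comp (v i) hupdate

theorem HasFDerivAt.sum_smul_deriv_update {f : (ι → 𝕜) → F} {f' : (ι → 𝕜) →L[𝕜] F}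
    {v : ι → 𝕜} (hf : HasFDerivAt f f' v) :
    ∑ i, v i • deriv (fun t => f (update v i t)) (v i) = f' v := by
  calc _ = ∑ i, f'.comp (.single 𝕜 (fun _ => 𝕜) i) (v i) := by
        refine Finset.sum_congr rfl fun i _ => ?_
        rw [(hf.comp_update i).hasDerivAt.deriv, ← map_smul, smul_eq_mul, mul_one]
    _ = f' v := f'.sum_comp_single (v := v)

theorem HasFDerivAt.sum_mul_deriv_update_update {κ : Type*} [Fintype κ] [DecidableEq κ]
    {f : (ι → κ → 𝕜) → 𝕜} {f' : (ι → κ → 𝕜) →L[𝕜] 𝕜} {A : ι → κ → 𝕜}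
    (hf : HasFDerivAt f f' A) :
    ∑ i, ∑ j, A i j * deriv (fun t => f (update A i (update (A i) j t))) (A i j) = f' A := by
  calc _ = ∑ i, f'.comp (.single 𝕜 (fun _ => κ → 𝕜) i) (A i) :=
        Finset.sum_congr rfl fun i _ => (hf.comp_update i).sum_smul_deriv_update
    _ = f' A := f'.sum_comp_single (v := A)

end PartialDerivatives

-- The entrywise sup norm: with it, `Matrix` is definitionally the normed space `ι → κ → ℝ`.
attribute [local instance] Matrix.normedAddCommGroup Matrix.normedSpace

section Network

variable {n : ℕ} {φ : ℝ → ℝ} (W : ℕ → Matrix (Fin n) (Fin n) ℝ) (x : Fin n → ℝ)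

theorem actL_succ (m : ℕ) :
    actL n φ W x (m + 1) = fun i => φ ((W (m + 1) *ᵥ actL n φ W x m) i) :=
  rfl

theorem netL_succ (m : ℕ) : netL n (m + 1) φ W x = W (m + 1) *ᵥ actL n φ W x m :=
  rfl

theorem actL_update_of_lt {l m : ℕ} (M : Matrix (Fin n) (Fin n) ℝ) (h : m < l) :
    actL n φ (update W l M) x m = actL n φ W x m := by
  induction m with
  | zero => rfl
  | succ m ih => rw [actL_succ, actL_succ, update_of_ne h.ne, ih (by omega)]

theorem satisfiesEulerAt_actL_update (hφd : Differentiable ℝ φ)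
    (hφ : ∀ x, φ x = deriv φ x * x) (p k : ℕ) :
    SatisfiesEulerAt ℝ (fun M => actL n φ (update W (p + 1) M) x (p + 1 + k)) (W (p + 1)) := by
  induction k with
  | zero =>
    have hform : (fun M => actL n φ (update W (p + 1) M) x (p + 1 + 0)) =
        (fun v i => φ (v i)) ∘ (mulVecBilin ℝ ℝ).flip (actL n φ W x p) := by
      funext M
      rw [Nat.add_zero, actL_succ, update_self, actL_update_of_lt W x M p.lt_succ_self]
      rfl
    rw [hform]
    exact (satisfiesEulerAt_pi_map hφd hφ _).comp (LinearMap.satisfiesEulerAt _ _)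
  | succ k ih =>
    have hform : (fun M => actL n φ (update W (p + 1) M) x (p + 1 + (k + 1))) =
        (fun v i => φ (v i)) ∘ (W (p + 1 + k + 1)).mulVecLin ∘
          (fun M => actL n φ (update W (p + 1) M) x (p + 1 + k)) := by
      funext M
      rw [← add_assoc, actL_succ, update_of_ne (by omega)]
      rfl
    rw [hform]
    exact (satisfiesEulerAt_pi_map hφd hφ _).comp ((LinearMap.satisfiesEulerAt _ _).comp ih)

theorem satisfiesEulerAt_netL_update (hφd : Differentiable ℝ φ)
    (hφ : ∀ x, φ x = deriv φ x * x) {L l : ℕ} (hl1 : 1 ≤ l) (hlL : l ≤ L) :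
    SatisfiesEulerAt ℝ (fun M => netL n L φ (update W l M) x) (W l) := by
  obtain ⟨p, rfl⟩ : ∃ p, l = p + 1 := ⟨l - 1, by omega⟩
  rcases hlL.eq_or_lt with rfl | hlt
  · have hform : (fun M => netL n (p + 1) φ (update W (p + 1) M) x) =
        (mulVecBilin ℝ ℝ).flip (actL n φ W x p) := by
      funext M
      rw [netL_succ, update_self, actL_update_of_lt W x M p.lt_succ_self]
      rfl
    rw [hform]
    exact LinearMap.satisfiesEulerAt _ _
  · obtain ⟨k, rfl⟩ : ∃ k, L = p + 1 + k + 1 := ⟨L - p - 2, by omega⟩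
    have hform : (fun M => netL n (p + 1 + k + 1) φ (update W (p + 1) M) x) =
        (W (p + 1 + k + 1)).mulVecLin ∘
          (fun M => actL n φ (update W (p + 1) M) x (p + 1 + k)) := by
      funext M
      rw [netL_succ, update_of_ne (by omega)]
      rfl
    rw [hform]
    exact (LinearMap.satisfiesEulerAt _ _).comp (satisfiesEulerAt_actL_update W x hφd hφ p k)

end Network

theorem stmt_2_general (n L : ℕ) (φ : ℝ → ℝ) (hφdiff : Differentiable ℝ φ)
    (hφ : ∀ x : ℝ, φ x = deriv φ x * x)
    (W : ℕ → Matrix (Fin n) (Fin n) ℝ) (x : Fin n → ℝ)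
    (R : (Fin n → ℝ) → ℝ) (hR : Differentiable ℝ R)
    (l : ℕ) (hl1 : 1 ≤ l) (hlL : l ≤ L) :
    ∑ i, ∑ j, W l i j *
        deriv (fun t => R (netL n L φ
          (Function.update W l ((W l).updateRow i (Function.update (W l i) j t))) x))
          (W l i j)
      = fderiv ℝ R (netL n L φ W x) (netL n L φ W x) := by
  obtain ⟨D, hD, hDW⟩ := satisfiesEulerAt_netL_update W x hφdiff hφ hl1 hlL
  simp only [update_eq_self] at hDW
  have hRD : HasFDerivAt (R ∘ fun M => netL n L φ (update W l M) x)
      ((fderiv ℝ R (netL n L φ W x)).comp D) (W l) := by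
    refine HasFDerivAt.comp (W l) ?_ hD
    simpa only [update_eq_self] using (hR (netL n L φ W x)).hasFDerivAt
  calc _ = (fderiv ℝ R (netL n L φ W x)).comp D (W l) := hRD.sum_mul_deriv_update_update
    _ = _ := by rw [ContinuousLinearMap.comp_apply, hDW]

/-- Network-wise conservation of synaptic saliency, specialized to the
layer cuts of an `L`-layer fully connected network with homogeneous activation: the
total synaptic saliency of the parameters of any layer `l` equals `⟨∇R(y), y⟩`. -/
theorem stmt_2 (n L : ℕ) (hL : 1 ≤ L) (φ : ℝ → ℝ) (hφdiff : Differentiable ℝ φ)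
    (hφ : ∀ x : ℝ, φ x = deriv φ x * x)
    (W : ℕ → Matrix (Fin n) (Fin n) ℝ) (x : Fin n → ℝ)
    (R : (Fin n → ℝ) → ℝ) (hR : Differentiable ℝ R)
    (l : ℕ) (hl1 : 1 ≤ l) (hlL : l ≤ L) :
    ∑ i, ∑ j, W l i j *
        deriv (fun t => R (netL n L φ
          (Function.update W l ((W l).updateRow i (Function.update (W l i) j t))) x))
          (W l i j)
      = fderiv ℝ R (netL n L φ W x) (netL n L φ W x) :=
  stmt_2_general n L φ hφdiff hφ W x R hR l hl1 hlL
end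

section
/- Let f : ℝ^n → ℝ^p satisfy f(αx) = α·f(x) for all α > 0 and all x, and suppose f is differentiable at x. Then (Df_x)(x) = f(x); consequently, for any R : ℝ^p → ℝ differentiable at f(x), the synaptic saliency attributed to the input equals that attributed to the output: ⟨∇(R∘f)(x), x⟩ = ⟨∇R(f(x)), f(x)⟩. -/
/-! Along the ray `t ↦ t • x`, homogeneity makes `f (t • x) = t • f x` for `t` near `1`, so
differentiating at `t = 1` gives Euler's identity `Df_x x = f x`. The conservation law is then the
chain rule: `⟨∇(R ∘ f) x, x⟩ = DR_{f x} (Df_x x) = DR_{f x} (f x) = ⟨∇R (f x), f x⟩`. -/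

open Filter Topology

theorem HasFDerivAt.apply_self_of_pos_homogeneous {E F : Type*}
    [NormedAddCommGroup E] [NormedSpace ℝ E] [NormedAddCommGroup F] [NormedSpace ℝ F]
    {f : E → F} {f' : E →L[ℝ] F} {x : E}
    (hf : ∀ α : ℝ, 0 < α → f (α • x) = α • f x) (hf' : HasFDerivAt f f' x) :
    f' x = f x := by
  have hray : HasDerivAt (fun t : ℝ => t • x) x 1 := by
    simpa using (hasDerivAt_id (1 : ℝ)).smul_const x
  have hchain : HasDerivAt (fun t : ℝ => f (t • x)) (f' x) 1 :=
    (by simpa using hf' : HasFDerivAt f f' ((1 : ℝ) • x)).comp_hasDerivAt 1 hray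
  have hlin : HasDerivAt (fun t : ℝ => t • f x) (f x) 1 := by
    simpa using (hasDerivAt_id (1 : ℝ)).smul_const (f x)
  have hnear : (fun t : ℝ => f (t • x)) =ᶠ[𝓝 1] fun t => t • f x := by
    filter_upwards [Ioi_mem_nhds one_pos] with t ht using hf t ht
  exact hchain.unique (hlin.congr_of_eventuallyEq hnear)

theorem inner_gradient_comp_self_of_fderiv_apply_self {E F : Type*}
    [NormedAddCommGroup E] [InnerProductSpace ℝ E] [CompleteSpace E]
    [NormedAddCommGroup F] [InnerProductSpace ℝ F] [CompleteSpace F]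
    {f : E → F} {R : F → ℝ} {x : E} (hR : DifferentiableAt ℝ R (f x))
    (hf : DifferentiableAt ℝ f x) (heuler : fderiv ℝ f x x = f x) :
    inner ℝ (gradient (R ∘ f) x) x = inner ℝ (gradient R (f x)) (f x) := by
  rw [inner_gradient_left, inner_gradient_left, fderiv_comp x hR hf,
    ContinuousLinearMap.comp_apply, heuler]

/-- If `f : ℝ^n → ℝ^p` is positively 1-homogeneous and differentiable
at `x`, then `(Df_x)(x) = f(x)`; consequently, for any `R` differentiable at `f(x)`,
the synaptic saliency attributed to the input equals that attributed to the output: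
`⟨∇(R∘f)(x), x⟩ = ⟨∇R(f(x)), f(x)⟩`. -/
theorem stmt_4 (n p : ℕ) (f : EuclideanSpace ℝ (Fin n) → EuclideanSpace ℝ (Fin p))
    (x : EuclideanSpace ℝ (Fin n))
    (hf : ∀ α : ℝ, 0 < α → ∀ y, f (α • y) = α • f y)
    (hfd : DifferentiableAt ℝ f x) :
    fderiv ℝ f x x = f x ∧
      ∀ R : EuclideanSpace ℝ (Fin p) → ℝ, DifferentiableAt ℝ R (f x) →
        (inner ℝ (gradient (R ∘ f) x) x : ℝ)
          = (inner ℝ (gradient R (f x)) (f x) : ℝ) := by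
  have heuler : fderiv ℝ f x x = f x :=
    hfd.hasFDerivAt.apply_self_of_pos_homogeneous fun α hα => hf α hα x
  exact ⟨heuler, fun R hR => inner_gradient_comp_self_of_fderiv_apply_self hR hfd heuler⟩
end

section
/- Let ℓ : ℝ^{p×n} → ℝ be differentiable and consider the two-layer linear network loss L(W₂, W₁) = ℓ(W₂·W₁) for W₁ ∈ ℝ^{m×n} and W₂ ∈ ℝ^{p×m}. Suppose differentiable curves W₁ : ℝ → ℝ^{m×n} and W₂ : ℝ → ℝ^{p×m} follow gradient flow on L, i.e. for all t, W₁'(t) = −(W₂(t))ᵀ·G(t) and W₂'(t) = −G(t)·(W₁(t))ᵀ, where G(t) ∈ ℝ^{p×n} is the gradient matrix of ℓ at W₂(t)·W₁(t) (the matrix representing the Fréchet derivative of ℓ under the Frobenius inner product). Then ‖W₁(t)‖_F² − ‖W₂(t)‖_F² is constant in t: for all t, ‖W₁(t)‖_F² − ‖W₂(t)‖_F² = ‖W₁(0)‖_F² − ‖W₂(0)‖_F². -/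
open Matrix

/-! The time derivative of `‖W₁‖² − ‖W₂‖²` along the flow is
`−2⟨W₁, W₂ᵀG⟩ + 2⟨W₂, GW₁ᵀ⟩`, and both inner products equal `tr(W₂ᵀ G W₁ᵀ)`.
So the difference has zero derivative everywhere and is constant. -/

theorem Matrix.sum_sum_mul_transpose_mul_apply {l m n R : Type*} [Fintype l] [Fintype m]
    [Fintype n] [CommSemiring R] (A : Matrix m n R) (B : Matrix l m R) (C : Matrix l n R) :
    ∑ i, ∑ j, A i j * (Bᵀ * C) i j = ∑ i, ∑ j, B i j * (C * Aᵀ) i j := by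
  simp only [mul_apply, transpose_apply, Finset.mul_sum]
  conv_lhs => enter [2, i]; rw [Finset.sum_comm]
  rw [Finset.sum_comm]
  exact Finset.sum_congr rfl fun k _ => Finset.sum_congr rfl fun i _ =>
    Finset.sum_congr rfl fun j _ => by ring

theorem hasDerivAt_sum_sum_sq {m n : Type*} [Fintype m] [Fintype n] {W : ℝ → Matrix m n ℝ}
    {W' : Matrix m n ℝ} {t : ℝ} (hW : ∀ i j, HasDerivAt (fun s => W s i j) (W' i j) t) :
    HasDerivAt (fun s => ∑ i, ∑ j, W s i j ^ 2) (2 * ∑ i, ∑ j, W t i j * W' i j) t := by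
  simp only [Finset.mul_sum]
  refine HasDerivAt.fun_sum fun i _ => HasDerivAt.fun_sum fun j _ =>
    ((hW i j).fun_pow 2).congr_deriv ?_
  norm_num
  ring

theorem stmt_7_general (n m p : ℕ)
    (W₁ : ℝ → Matrix (Fin m) (Fin n) ℝ) (W₂ : ℝ → Matrix (Fin p) (Fin m) ℝ)
    (G : ℝ → Matrix (Fin p) (Fin n) ℝ)
    (hW₁ : ∀ t i j, HasDerivAt (fun s => W₁ s i j) (-((W₂ t)ᵀ * G t) i j) t)
    (hW₂ : ∀ t i j, HasDerivAt (fun s => W₂ s i j) (-(G t * (W₁ t)ᵀ) i j) t) :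
    ∀ t : ℝ,
      (∑ i, ∑ j, W₁ t i j ^ 2) - (∑ i, ∑ j, W₂ t i j ^ 2)
        = (∑ i, ∑ j, W₁ 0 i j ^ 2) - (∑ i, ∑ j, W₂ 0 i j ^ 2) := by
  have hderiv : ∀ s, HasDerivAt
      (fun u => (∑ i, ∑ j, W₁ u i j ^ 2) - (∑ i, ∑ j, W₂ u i j ^ 2)) 0 s := by
    intro s
    refine ((hasDerivAt_sum_sum_sq (hW₁ s)).fun_sub
      (hasDerivAt_sum_sum_sq (hW₂ s))).congr_deriv ?_
    simp only [mul_neg, Finset.sum_neg_distrib,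
      sum_sum_mul_transpose_mul_apply (W₁ s) (W₂ s) (G s), sub_self]
  intro t
  exact is_const_of_deriv_eq_zero (fun s => (hderiv s).differentiableAt)
    (fun s => (hderiv s).deriv) t 0

/-- Gradient flow on a two-layer linear network loss
`L(W₂, W₁) = ℓ(W₂·W₁)` conserves the difference of squared Frobenius norms
`‖W₁(t)‖_F² − ‖W₂(t)‖_F²` over time. Here `G(t)` is the gradient matrix of `ℓ` at
`W₂(t)·W₁(t)`, i.e. the matrix representing the Fréchet derivative of `ℓ` under the
Frobenius inner product, and the curves follow `W₁' = −W₂ᵀG`, `W₂' = −GW₁ᵀ`. -/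
theorem stmt_7 (n m p : ℕ) (ℓ : Matrix (Fin p) (Fin n) ℝ → ℝ) (hℓ : Differentiable ℝ ℓ)
    (W₁ : ℝ → Matrix (Fin m) (Fin n) ℝ) (W₂ : ℝ → Matrix (Fin p) (Fin m) ℝ)
    (G : ℝ → Matrix (Fin p) (Fin n) ℝ)
    (hG : ∀ t, ∀ H : Matrix (Fin p) (Fin n) ℝ,
      fderiv ℝ ℓ (W₂ t * W₁ t) H = ∑ i, ∑ j, G t i j * H i j)
    (hW₁ : ∀ t i j, HasDerivAt (fun s => W₁ s i j) (-((W₂ t)ᵀ * G t) i j) t)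
    (hW₂ : ∀ t i j, HasDerivAt (fun s => W₂ s i j) (-(G t * (W₁ t)ᵀ) i j) t) :
    ∀ t : ℝ,
      (∑ i, ∑ j, W₁ t i j ^ 2) - (∑ i, ∑ j, W₂ t i j ^ 2)
        = (∑ i, ∑ j, W₁ 0 i j ^ 2) - (∑ i, ∑ j, W₂ 0 i j ^ 2) :=
  stmt_7_general n m p W₁ W₂ G hW₁ hW₂
end

section
/- Let φ : ℝ → ℝ be continuously differentiable with φ(x) = (deriv φ x) * x for all x (a homogeneous activation). Fix inputs x^{(1)}, …, x^{(N)} ∈ ℝ^n and differentiable functions ψ_1, …, ψ_N : ℝ^p → ℝ, and consider the two-layer network loss L(W, b, V) = Σ_n ψ_n(V·φ.(W x^{(n)} + b)) for W ∈ ℝ^{m×n}, b ∈ ℝ^m, V ∈ ℝ^{p×m}. Suppose differentiable curves W(t), b(t), V(t) follow gradient flow on L (each parameter's time derivative equals minus the corresponding partial derivative of L). Then for every hidden unit j, the quantity Σ_k W_{jk}(t)² + b_j(t)² − Σ_i V_{ij}(t)² is constant in t. -/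
/-- The two-layer network loss `L(W, b, V) = Σ_n ψ_n(V·φ.(W x^{(n)} + b))` over a batch
of inputs `x^{(1)}, …, x^{(N)}`. -/
noncomputable def twoLayerLoss (N n m p : ℕ) (φ : ℝ → ℝ) (x : Fin N → Fin n → ℝ)
    (ψ : Fin N → (Fin p → ℝ) → ℝ) (W : Matrix (Fin m) (Fin n) ℝ) (b : Fin m → ℝ)
    (V : Matrix (Fin p) (Fin m) ℝ) : ℝ :=
  ∑ ex, ψ ex (fun i => ∑ j, V i j * φ ((∑ kk, W j kk * x ex kk) + b j))

/-!
For a hidden unit `j`, homogeneity `φ(λa) = λφ(a)` makes the network output invariant under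
`(W_j, b_j, V_{·j}) ↦ (λW_j, λb_j, λ⁻¹V_{·j})`. The infinitesimal form of this symmetry is
Euler's identity `φ a = φ' a * a`, which gives
`Σ_k W_jk ∂L/∂W_jk + b_j ∂L/∂b_j = Σ_i V_ij ∂L/∂V_ij`.
Under gradient flow the time derivative of `Σ_k W_jk² + b_j² − Σ_i V_ij²` is `−2` times the
difference of the two sides, hence zero.
-/

open Matrix

theorem hasDerivAt_updateRow_update_mulVec {η ο : Type*} [Fintype η] [Fintype ο] [DecidableEq η]
    [DecidableEq ο] (A : Matrix ο η ℝ) (i : ο) (j : η) (v : η → ℝ) (u : ℝ) :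
    HasDerivAt (fun u => A.updateRow i (Function.update (A i) j u) *ᵥ v)
      (Pi.single i (v j)) u := by
  simp only [updateRow_mulVec]
  have hrow : HasDerivAt (fun u => Function.update (A i) j u ⬝ᵥ v) (v j) u := by
    have := ((dotProductBilin ℝ ℝ).flip v).toContinuousLinearMap.hasFDerivAt.comp_hasDerivAt u
      (hasDerivAt_update (A i) j u)
    simpa [Function.comp_def] using this
  have h := (hasDerivAt_update (A *ᵥ v) i _).scomp u hrow
  rwa [← Pi.single_smul', smul_eq_mul, mul_one] at h

theorem hasDerivAt_mulVec {η ο : Type*} [Fintype η] (V : Matrix ο η ℝ) {h : ℝ → η → ℝ}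
    {h' : η → ℝ} {u : ℝ} (hh : HasDerivAt h h' u) :
    HasDerivAt (fun u => V *ᵥ h u) (V *ᵥ h') u :=
  hasDerivAt_pi.2 fun i =>
    HasDerivAt.fun_sum fun j _ => (hasDerivAt_pi.1 hh j).const_mul (V i j)

theorem hasDerivAt_mulVec_comp_of_hasDerivAt_single {η ο : Type*} [Fintype η] [DecidableEq η]
    {φ : ℝ → ℝ} (hφ : Differentiable ℝ φ) (V : Matrix ο η ℝ) {z : ℝ → η → ℝ} {j : η} {c u : ℝ}
    (hz : HasDerivAt z (Pi.single j c) u) :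
    HasDerivAt (fun u => V *ᵥ (φ ∘ z u)) ((deriv φ (z u j) * c) • V.col j) u := by
  have hact : HasDerivAt (fun u => φ ∘ z u) (Pi.single j (deriv φ (z u j) * c)) u := by
    refine hasDerivAt_pi.2 fun j' => ?_
    have := (hφ (z u j')).hasDerivAt.comp u (hasDerivAt_pi.1 hz j')
    rcases eq_or_ne j' j with rfl | h
    · simpa [Function.comp_def] using this
    · simpa [Function.comp_def, h] using this
  simpa [← MulOpposite.op_mul, op_smul_eq_smul, mul_comm] using hasDerivAt_mulVec V hact

section

variable {ι η ο : Type*} [Fintype ι] {φ : ℝ → ℝ}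

def netOutput [Fintype η] (φ : ℝ → ℝ) (W : Matrix η ι ℝ) (b : η → ℝ) (V : Matrix ο η ℝ)
    (xe : ι → ℝ) : ο → ℝ :=
  V *ᵥ (φ ∘ (W *ᵥ xe + b))

theorem hasDerivAt_netOutput_weight [Fintype η] [DecidableEq ι] [DecidableEq η]
    (hφ : Differentiable ℝ φ) (W : Matrix η ι ℝ) (b : η → ℝ) (V : Matrix ο η ℝ) (xe : ι → ℝ)
    (j : η) (k : ι) :
    HasDerivAt (fun u => netOutput φ (W.updateRow j (Function.update (W j) k u)) b V xe)
      ((deriv φ ((W *ᵥ xe + b) j) * xe k) • V.col j) (W j k) := by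
  have hz := (hasDerivAt_updateRow_update_mulVec W j k xe (W j k)).add_const b
  simpa [netOutput] using hasDerivAt_mulVec_comp_of_hasDerivAt_single hφ V hz

theorem hasDerivAt_netOutput_bias [Fintype η] [DecidableEq η] (hφ : Differentiable ℝ φ)
    (W : Matrix η ι ℝ) (b : η → ℝ) (V : Matrix ο η ℝ) (xe : ι → ℝ) (j : η) :
    HasDerivAt (fun u => netOutput φ W (Function.update b j u) V xe)
      (deriv φ ((W *ᵥ xe + b) j) • V.col j) (b j) := by
  have hz := (hasDerivAt_update b j (b j)).const_add (W *ᵥ xe)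
  simpa [netOutput] using hasDerivAt_mulVec_comp_of_hasDerivAt_single hφ V hz

theorem hasDerivAt_netOutput_outWeight [Fintype η] [DecidableEq η] [Fintype ο] [DecidableEq ο]
    (W : Matrix η ι ℝ) (b : η → ℝ) (V : Matrix ο η ℝ) (xe : ι → ℝ) (i : ο) (j : η) :
    HasDerivAt (fun u => netOutput φ W b (V.updateRow i (Function.update (V i) j u)) xe)
      (Pi.single i (φ ((W *ᵥ xe + b) j))) (V i j) :=
  hasDerivAt_updateRow_update_mulVec V i j _ _

theorem netOutput_euler_identity [Fintype ο] [DecidableEq ο]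
    (hφhom : ∀ y, φ y = deriv φ y * y) (W : Matrix η ι ℝ) (b : η → ℝ) (V : Matrix ο η ℝ)
    (xe : ι → ℝ) (j : η) :
    ∑ k, W j k • ((deriv φ ((W *ᵥ xe + b) j) * xe k) • V.col j)
        + b j • (deriv φ ((W *ᵥ xe + b) j) • V.col j)
      = ∑ i, V i j • Pi.single i (φ ((W *ᵥ xe + b) j)) := by
  set a := (W *ᵥ xe + b) j with ha
  have hcoeff : ∑ k, W j k * (deriv φ a * xe k) + b j * deriv φ a = φ a := by
    rw [hφhom a]
    generalize deriv φ a = d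
    rw [ha, Pi.add_apply, mulVec, dotProduct, mul_add, Finset.mul_sum]
    simp only [mul_left_comm, mul_comm]
  have hcol : ∑ i, V i j • (Pi.single i (φ a) : ο → ℝ) = φ a • V.col j := by
    ext i
    simp [Finset.sum_apply, Pi.single_apply, mul_comm]
  rw [hcol, ← hcoeff, add_smul, Finset.sum_smul]
  simp only [smul_smul]

end

theorem hasDerivAt_sum_comp {α E : Type*} [Fintype α] [NormedAddCommGroup E] [NormedSpace ℝ E]
    {ψ : α → E → ℝ} {o : α → ℝ → E} {o' : α → E} {u : ℝ}
    (hψ : ∀ a, DifferentiableAt ℝ (ψ a) (o a u)) (ho : ∀ a, HasDerivAt (o a) (o' a) u) :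
    HasDerivAt (fun u => ∑ a, ψ a (o a u)) (∑ a, fderiv ℝ (ψ a) (o a u) (o' a)) u :=
  HasDerivAt.fun_sum fun a _ => (hψ a).hasFDerivAt.comp_hasDerivAt u (ho a)

theorem hasDerivAt_sum_sq {α : Type*} [Fintype α] {f : ℝ → α → ℝ} {f' : α → ℝ} {t : ℝ}
    (hf : ∀ a, HasDerivAt (fun s => f s a) (f' a) t) :
    HasDerivAt (fun s => ∑ a, f s a ^ 2) (2 * ∑ a, f t a * f' a) t := by
  rw [Finset.mul_sum]
  exact HasDerivAt.fun_sum fun a _ => by simpa [mul_assoc] using (hf a).fun_pow 2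

section

variable {N n m p : ℕ} {φ : ℝ → ℝ} {x : Fin N → Fin n → ℝ} {ψ : Fin N → (Fin p → ℝ) → ℝ}

theorem hasDerivAt_twoLayerLoss_weight (hφ : Differentiable ℝ φ)
    (hψ : ∀ ex, Differentiable ℝ (ψ ex)) (W : Matrix (Fin m) (Fin n) ℝ) (b : Fin m → ℝ)
    (V : Matrix (Fin p) (Fin m) ℝ) (j : Fin m) (k : Fin n) :
    HasDerivAt
      (fun u => twoLayerLoss N n m p φ x ψ (W.updateRow j (Function.update (W j) k u)) b V)
      (∑ ex, fderiv ℝ (ψ ex) (netOutput φ W b V (x ex))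
        ((deriv φ ((W *ᵥ x ex + b) j) * x ex k) • V.col j)) (W j k) := by
  have h := hasDerivAt_sum_comp (fun ex => hψ ex _)
    fun ex => hasDerivAt_netOutput_weight hφ W b V (x ex) j k
  simp only [Function.update_eq_self, updateRow_eq_self] at h
  exact h

theorem hasDerivAt_twoLayerLoss_bias (hφ : Differentiable ℝ φ)
    (hψ : ∀ ex, Differentiable ℝ (ψ ex)) (W : Matrix (Fin m) (Fin n) ℝ) (b : Fin m → ℝ)
    (V : Matrix (Fin p) (Fin m) ℝ) (j : Fin m) :
    HasDerivAt (fun u => twoLayerLoss N n m p φ x ψ W (Function.update b j u) V)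
      (∑ ex, fderiv ℝ (ψ ex) (netOutput φ W b V (x ex))
        (deriv φ ((W *ᵥ x ex + b) j) • V.col j)) (b j) := by
  have h := hasDerivAt_sum_comp (fun ex => hψ ex _)
    fun ex => hasDerivAt_netOutput_bias hφ W b V (x ex) j
  simp only [Function.update_eq_self] at h
  exact h

theorem hasDerivAt_twoLayerLoss_outWeight (hψ : ∀ ex, Differentiable ℝ (ψ ex))
    (W : Matrix (Fin m) (Fin n) ℝ) (b : Fin m → ℝ) (V : Matrix (Fin p) (Fin m) ℝ)
    (i : Fin p) (j : Fin m) :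
    HasDerivAt
      (fun u => twoLayerLoss N n m p φ x ψ W b (V.updateRow i (Function.update (V i) j u)))
      (∑ ex, fderiv ℝ (ψ ex) (netOutput φ W b V (x ex))
        (Pi.single i (φ ((W *ᵥ x ex + b) j)))) (V i j) := by
  have h := hasDerivAt_sum_comp (fun ex => hψ ex _)
    fun ex => hasDerivAt_netOutput_outWeight (φ := φ) W b V (x ex) i j
  simp only [Function.update_eq_self, updateRow_eq_self] at h
  exact h

theorem twoLayerLoss_euler_identity (hφ : Differentiable ℝ φ) (hφhom : ∀ y, φ y = deriv φ y * y)
    (hψ : ∀ ex, Differentiable ℝ (ψ ex)) (W : Matrix (Fin m) (Fin n) ℝ) (b : Fin m → ℝ)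
    (V : Matrix (Fin p) (Fin m) ℝ) (j : Fin m) :
    ∑ k, W j k * deriv (fun u => twoLayerLoss N n m p φ x ψ
          (W.updateRow j (Function.update (W j) k u)) b V) (W j k)
        + b j * deriv (fun u => twoLayerLoss N n m p φ x ψ W (Function.update b j u) V) (b j)
      = ∑ i, V i j * deriv (fun u => twoLayerLoss N n m p φ x ψ
          W b (V.updateRow i (Function.update (V i) j u))) (V i j) := by
  simp only [(hasDerivAt_twoLayerLoss_weight hφ hψ W b V j _).deriv,
    (hasDerivAt_twoLayerLoss_bias hφ hψ W b V j).deriv,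
    (hasDerivAt_twoLayerLoss_outWeight hψ W b V _ j).deriv, Finset.mul_sum]
  rw [Finset.sum_comm, ← Finset.sum_add_distrib, Finset.sum_comm]
  refine Finset.sum_congr rfl fun ex _ => ?_
  have h := congrArg (fderiv ℝ (ψ ex) (netOutput φ W b V (x ex)))
    (netOutput_euler_identity hφhom W b V (x ex) j)
  simpa only [map_add, map_sum, map_smul, smul_eq_mul] using h

end

/-- Under gradient flow on a two-layer network loss with homogeneous
activation, for every hidden unit `j` the quantity
`Σ_k W_{jk}(t)² + b_j(t)² − Σ_i V_{ij}(t)²` is constant in time. -/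
theorem stmt_8 (N n m p : ℕ) (φ : ℝ → ℝ) (hφ : ContDiff ℝ 1 φ)
    (hφhom : ∀ x : ℝ, φ x = deriv φ x * x)
    (x : Fin N → Fin n → ℝ) (ψ : Fin N → (Fin p → ℝ) → ℝ)
    (hψ : ∀ ex, Differentiable ℝ (ψ ex))
    (W : ℝ → Matrix (Fin m) (Fin n) ℝ) (b : ℝ → Fin m → ℝ)
    (V : ℝ → Matrix (Fin p) (Fin m) ℝ)
    (hW : ∀ t j k, HasDerivAt (fun s => W s j k)
      (-(deriv (fun u => twoLayerLoss N n m p φ x ψ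
          ((W t).updateRow j (Function.update (W t j) k u)) (b t) (V t)) (W t j k))) t)
    (hb : ∀ t j, HasDerivAt (fun s => b s j)
      (-(deriv (fun u => twoLayerLoss N n m p φ x ψ
          (W t) (Function.update (b t) j u) (V t)) (b t j))) t)
    (hV : ∀ t i j, HasDerivAt (fun s => V s i j)
      (-(deriv (fun u => twoLayerLoss N n m p φ x ψ
          (W t) (b t) ((V t).updateRow i (Function.update (V t i) j u))) (V t i j))) t) :
    ∀ (j : Fin m) (t : ℝ),
      (∑ k, W t j k ^ 2) + b t j ^ 2 - (∑ i, V t i j ^ 2)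
        = (∑ k, W 0 j k ^ 2) + b 0 j ^ 2 - (∑ i, V 0 i j ^ 2) := by
  intro j t
  have hφd : Differentiable ℝ φ := hφ.differentiable one_ne_zero
  have hconserved : ∀ s, HasDerivAt
      (fun s => (∑ k, W s j k ^ 2) + b s j ^ 2 - (∑ i, V s i j ^ 2)) 0 s := by
    intro s
    have heuler := twoLayerLoss_euler_identity hφd hφhom hψ (W s) (b s) (V s) j (x := x)
    refine (((hasDerivAt_sum_sq (hW s j)).add ((hb s j).fun_pow 2)).sub
      (hasDerivAt_sum_sq fun i => hV s i j)).congr_deriv ?_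
    norm_num only [mul_neg, Finset.sum_neg_distrib]
    linarith
  exact is_const_of_deriv_eq_zero (fun s => (hconserved s).differentiableAt)
    (fun s => (hconserved s).deriv) t 0
end

section
/- Let W_1, …, W_L ∈ ℝ^{n×n} and define the SynFlow objective R_SF = 1ᵀ·(|W_L|·|W_{L-1}|⋯|W_1|)·1, where |W| is the entrywise absolute value and 1 is the all-ones vector in ℝ^n. Then for every layer l ∈ {1, …, L}, the total SynFlow score of layer l equals R_SF: Σ_{i,j} [1ᵀ·∏_{k=l+1}^{L}|W_k|]_i · |(W_l)_{ij}| · [∏_{k=1}^{l-1}|W_k|·1]_j = R_SF (empty products being the identity matrix). In particular, the total SynFlow score is the same for every layer. -/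
/-- The ordered product of entrywise absolute values of weight matrices:
`chainAbs n W a b = |W_b|·|W_{b-1}|⋯|W_a|` (the identity matrix if `b < a`). -/
noncomputable def chainAbs (n : ℕ) (W : ℕ → Matrix (Fin n) (Fin n) ℝ) (a b : ℕ) :
    Matrix (Fin n) (Fin n) ℝ :=
  (((List.range' a (b + 1 - a)).reverse).map fun k => (W k).map fun t => |t|).prod

/-! The total score of a layer is `1ᵀ·(|W_L|⋯|W_{l+1}|)·|W_l|·(|W_{l-1}|⋯|W_1|)·1`, and the three
factors multiply back to the full chain `|W_L|⋯|W_1|`: the layer-wise score is just the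
objective with the product bracketed around layer `l`. -/

open Matrix Finset

theorem Matrix.sum_sum_mul_mul_apply {ι κ μ ν R : Type*} [Fintype ι] [Fintype κ] [Fintype μ]
    [Fintype ν] [CommSemiring R] (A : Matrix ι κ R) (B : Matrix κ μ R) (C : Matrix μ ν R) :
    ∑ i, ∑ j, (A * B * C) i j = ∑ k, ∑ m, (∑ i, A i k) * B k m * (∑ j, C m j) := by
  have sum_eq (M : Matrix ι ν R) : ∑ i, ∑ j, M i j = 1 ⬝ᵥ M *ᵥ 1 := by
    simp [dotProduct, mulVec]
  calc ∑ i, ∑ j, (A * B * C) i j = (1 ᵥ* A) ⬝ᵥ B *ᵥ (C *ᵥ 1) := by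
        rw [sum_eq, ← mulVec_mulVec, ← mulVec_mulVec, dotProduct_mulVec]
    _ = _ := by simp [dotProduct, mulVec, vecMul, mul_sum, sum_mul, mul_assoc]

section chainAbs

variable (n : ℕ) (W : ℕ → Matrix (Fin n) (Fin n) ℝ)

theorem chainAbs_eq_mul {a m b : ℕ} (ham : a ≤ m + 1) (hmb : m ≤ b) :
    chainAbs n W a b = chainAbs n W (m + 1) b * chainAbs n W a m := by
  have hsplit : List.range' a (b + 1 - a)
      = List.range' a (m + 1 - a) ++ List.range' (m + 1) (b + 1 - (m + 1)) := by
    rw [show b + 1 - a = (m + 1 - a) + (b - m) by omega, ← List.range'_append_1,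
      Nat.add_sub_cancel' ham, Nat.add_sub_add_right]
  rw [chainAbs, hsplit, List.reverse_append, List.map_append, List.prod_append]
  rfl

theorem chainAbs_self (l : ℕ) : chainAbs n W l l = (W l).map fun t => |t| := by
  simp [chainAbs]

theorem chainAbs_eq_mul_layer_mul {a l b : ℕ} (hl : 0 < l) (hal : a ≤ l) (hlb : l ≤ b) :
    chainAbs n W a b
      = chainAbs n W (l + 1) b * ((W l).map fun t => |t|) * chainAbs n W a (l - 1) := by
  rw [chainAbs_eq_mul n W (m := l) (by omega) hlb,
    chainAbs_eq_mul n W (a := a) (m := l - 1) (b := l) (by omega) (by omega),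
    Nat.sub_add_cancel hl, chainAbs_self, Matrix.mul_assoc]

end chainAbs

theorem stmt_10_general (n L : ℕ) (W : ℕ → Matrix (Fin n) (Fin n) ℝ)
    (l : ℕ) (hl1 : 1 ≤ l) (hlL : l ≤ L) :
    ∑ i, ∑ j, (∑ r, chainAbs n W (l + 1) L r i) * |W l i j| * (∑ c, chainAbs n W 1 (l - 1) j c)
      = ∑ i, ∑ j, chainAbs n W 1 L i j := by
  rw [chainAbs_eq_mul_layer_mul n W hl1 hl1 hlL, Matrix.sum_sum_mul_mul_apply]
  rfl

/-- Layer-wise conservation of the SynFlow score: for every layer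
`l`, the total SynFlow score `Σ_{i,j} [1ᵀ∏_{k>l}|W_k|]_i·|(W_l)_{ij}|·[∏_{k<l}|W_k|·1]_j`
equals the SynFlow objective `R_SF = 1ᵀ(|W_L|⋯|W_1|)·1`. -/
theorem stmt_10 (n L : ℕ) (hL : 1 ≤ L) (W : ℕ → Matrix (Fin n) (Fin n) ℝ)
    (l : ℕ) (hl1 : 1 ≤ l) (hlL : l ≤ L) :
    ∑ i, ∑ j, (∑ r, chainAbs n W (l + 1) L r i) * |W l i j| * (∑ c, chainAbs n W 1 (l - 1) j c)
      = ∑ i, ∑ j, chainAbs n W 1 L i j :=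
  stmt_10_general n L W l hl1 hlL
end

section
/- Let ι be a finite index set of parameters and B_1, …, B_L ⊆ ι nonempty pairwise disjoint sets (the layers). Consider an iterative pruning procedure producing a decreasing sequence of masks μ_0 ⊇ μ_1 ⊇ μ_2 ⊇ ⋯ of subsets of ι with μ_0 = ι, such that at every iteration k there is a score function s_k : ι → ℝ with s_k(i) > 0 for all i ∈ μ_k, the scores are layer-wise conserved on the remaining parameters (there is C_k with Σ_{i ∈ μ_k ∩ B_l} s_k(i) = C_k for every layer l), and the prune size is strictly less than the cut size: Σ_{i ∈ μ_k \ μ_{k+1}} s_k(i) < C_k. Then layer-collapse never occurs: for every iteration k and every layer l, μ_k ∩ B_l ≠ ∅. -/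
/-!
Positive scores make the prune size nonnegative, so the cut size `C k` exceeds zero. By
conservation `C k` is the total score of the remaining parameters of each layer, and a set
of positive total score is nonempty.
-/

theorem Finset.nonempty_of_sum_lt_sum_of_nonneg {α M : Type*} [AddCommMonoid M] [PartialOrder M]
    [IsOrderedAddMonoid M] {s t : Finset α} {f : α → M}
    (hf : ∀ i ∈ s, 0 ≤ f i) (h : ∑ i ∈ s, f i < ∑ i ∈ t, f i) : t.Nonempty :=
  Finset.nonempty_of_sum_ne_zero ((Finset.sum_nonneg hf).trans_lt h).ne'

theorem stmt_14_general (ι : Type*) [DecidableEq ι] (L : ℕ)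
    (B : Fin L → Finset ι)
    (μ : ℕ → Finset ι)
    (s : ℕ → ι → ℝ) (hpos : ∀ k i, i ∈ μ k → 0 < s k i)
    (C : ℕ → ℝ) (hcons : ∀ k l, ∑ i ∈ μ k ∩ B l, s k i = C k)
    (hprune : ∀ k, ∑ i ∈ μ k \ μ (k + 1), s k i < C k) :
    ∀ k l, (μ k ∩ B l).Nonempty := by
  intro k l
  have hprune_nonneg : ∀ i ∈ μ k \ μ (k + 1), 0 ≤ s k i := fun i hi =>
    (hpos k i (Finset.mem_sdiff.mp hi).1).le
  exact Finset.nonempty_of_sum_lt_sum_of_nonneg hprune_nonneg (hcons k l ▸ hprune k)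

/-- An iterative pruning procedure with positive, layer-wise
conserved scores whose prune size at every iteration is strictly less than the cut
size never induces layer-collapse: at every iteration `k`, every layer `l` retains at
least one parameter. -/
theorem stmt_14 (ι : Type*) [Fintype ι] [DecidableEq ι] (L : ℕ)
    (B : Fin L → Finset ι) (hBne : ∀ l, (B l).Nonempty)
    (hdisj : ∀ l l', l ≠ l' → Disjoint (B l) (B l'))
    (μ : ℕ → Finset ι) (hμ0 : μ 0 = Finset.univ)
    (hμdec : ∀ k, μ (k + 1) ⊆ μ k)
    (s : ℕ → ι → ℝ) (hpos : ∀ k i, i ∈ μ k → 0 < s k i)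
    (C : ℕ → ℝ) (hcons : ∀ k l, ∑ i ∈ μ k ∩ B l, s k i = C k)
    (hprune : ∀ k, ∑ i ∈ μ k \ μ (k + 1), s k i < C k) :
    ∀ k l, (μ k ∩ B l).Nonempty :=
  stmt_14_general ι L B μ s hpos C hcons hprune
end
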